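/- arXiv:2301.05822 — 4 statements merged into one kernel-verified Lean document; each statement's English description precedes it below -/
import Mathlib

section
/- Let a and b be digits with 1 ≤ a ≤ b ≤ 9 and let J(a,b) = (a*b - a♣b)/10. Then: J(a,b) = a if (a = 1 or b = 9) and b - a ≥ 3; J(a,b) = a if b - a ≥ 5; J(a,b) = a - 2 if 3 ≤ a ≤ b ≤ 7 and b - a ≤ 1; and J(a,b) = a - 1 otherwise. -/
/-- The plum-blossom product: the unique integer r with -6 ≤ r ≤ 3
    such that a*b ≡ r (mod 10). -/
def pb (a b : ℤ) : ℤ := (a * b + 6) % 10 - 6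

/-- The carry: a*b = pb a b + 10 * J a b. -/
def J (a b : ℤ) : ℤ := (a * b - pb a b) / 10

/-- The plum-blossom wedge product (a,b)⋈c = a♣c + J(b,c). -/
def wedge (a b c : ℤ) : ℤ := pb a c + J b c

theorem J_formula (a b : ℤ) (h1 : 1 ≤ a) (hab : a ≤ b) (h9 : b ≤ 9) :
    (((a = 1 ∨ b = 9) ∧ b - a ≥ 3) → J a b = a) ∧
    (b - a ≥ 5 → J a b = a) ∧
    ((3 ≤ a ∧ b ≤ 7 ∧ b - a ≤ 1) → J a b = a - 2) ∧
    (¬(((a = 1 ∨ b = 9) ∧ b - a ≥ 3) ∨ b - a ≥ 5 ∨ (3 ≤ a ∧ b ≤ 7 ∧ b - a ≤ 1)) →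
      J a b = a - 1) := by
  have h9a : a ≤ 9 := hab.trans h9
  interval_cases a <;> interval_cases b <;> simp_all [J, pb]
end

section
/- If c is an even digit and a ≤ 4, then for any digit b, (a+5,b)⋈c = (a,b)⋈c. -/
theorem wedge_add_five_left (a b c : ℤ) (ha : 0 ≤ a) (ha4 : a ≤ 4) (hb : 0 ≤ b) (hb9 : b ≤ 9)
    (hc : 0 ≤ c) (hc9 : c ≤ 9) (hce : Even c) :
    wedge (a + 5) b c = wedge a b c := by
  obtain ⟨k, hk⟩ := hce
  unfold wedge pb
  have h : (a + 5) * c = a * c + 10 * k := by rw [hk]; ring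
  have h2 : a * c + 10 * k + 6 = a * c + 6 + k * 10 := by ring
  rw [h, h2, Int.add_mul_emod_self_right]
end

section
/- If c is an even digit and b ≤ 4, then for any digit a, (a,b+5)⋈c = (a,b)⋈c + c/2. -/
theorem wedge_add_five_right (a b c : ℤ) (ha : 0 ≤ a) (ha9 : a ≤ 9) (hb : 0 ≤ b) (hb4 : b ≤ 4)
    (hc : 0 ≤ c) (hc9 : c ≤ 9) (hce : Even c) :
    wedge a (b + 5) c = wedge a b c + c / 2 := by
  rw [Int.even_iff] at hce
  unfold wedge J pb
  interval_cases c <;> omega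
end

section
/- Let a, b, c be digits with 1 ≤ c ≤ b ≤ 9 and 0 ≤ a ≤ 8, and set a⁺ = a + 1 and δ(x,y) = J(x,y) - min(x,y). If (a ≥ c and δ(a⁺,c) = δ(a,c)) or (a < c and δ(a⁺,c) ≠ δ(a,c)), then (a,b)⋈c = a⁺♣c + δ(b,c); otherwise (a,b)⋈c = a⁺♣c + 10 + δ(b,c). -/
theorem wedge_formula (a b c : ℤ) (hc : 1 ≤ c) (hcb : c ≤ b) (hb9 : b ≤ 9)
    (ha : 0 ≤ a) (ha8 : a ≤ 8) :
    (((a ≥ c ∧ J (a + 1) c - min (a + 1) c = J a c - min a c) ∨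
      (a < c ∧ J (a + 1) c - min (a + 1) c ≠ J a c - min a c)) →
      wedge a b c = pb (a + 1) c + (J b c - min b c)) ∧
    (¬((a ≥ c ∧ J (a + 1) c - min (a + 1) c = J a c - min a c) ∨
      (a < c ∧ J (a + 1) c - min (a + 1) c ≠ J a c - min a c)) →
      wedge a b c = pb (a + 1) c + 10 + (J b c - min b c)) := by
  have hm : min b c = c := min_eq_right hcb
  have hc9 : c ≤ 9 := hcb.trans hb9
  rw [hm]
  simp only [wedge, pb, J, ge_iff_le, min_def]
  interval_cases a <;> interval_cases c <;> constructor <;> intro h <;> omega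
end
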